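/- arXiv:1305.3174 — 5 statements merged into one kernel-verified Lean document; each statement's English description precedes it below -/
import Mathlib

section
/- Let Γ be a 3-regular planar graph that is the one-skeleton of a 3-dimensional manifold with faces homeomorphic to the 3-disk D³. Then for every vertex p of Γ, the graph Γ \ {p} obtained by deleting p (and its incident edges) is connected. -/
/-!
Removing `p` leaves every other vertex joined to one of the three neighbours of `p`, so it
suffices to join any two neighbours `x, y` of `p` avoiding `p`. Two facets pass through each of
the edges `px`, `py` and only three through `p`, so some facet contains `p`, `x` and `y`. That
facet is a cycle, and a cycle minus one of its vertices is still connected.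
-/

/-- Combinatorial data of the one-skeleton `Γ` of a 3-dimensional manifold with faces `Q`
homeomorphic to the 3-disk `D³`.  `Γ` is a 3-regular graph embedded in the boundary
2-sphere `∂Q = S²` (hence planar, which is recorded by Euler's formula for the embedding),
`Facets` is the set of facets of `Q`, each facet being a cycle (connected 2-valent
subgraph) recorded by its vertex set; every vertex lies on exactly 3 facets, every edge
on exactly 2 facets, and the niceness of `Q` forces any two distinct facets to meet in
at most a vertex or an edge. -/
structure DiskFaceGraph (V : Type) [Fintype V] [DecidableEq V] where
  G : SimpleGraph V
  regular : ∀ v : V, {w : V | G.Adj v w}.ncard = 3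
  connected : G.Connected
  Facets : Finset (Finset V)
  facet_card : ∀ F ∈ Facets, 3 ≤ F.card
  facet_conn : ∀ F ∈ Facets, (G.induce (F : Set V)).Connected
  facet_two_valent : ∀ F ∈ Facets, ∀ v ∈ F, {w : V | w ∈ F ∧ G.Adj v w}.ncard = 2
  vertex_facets : ∀ v : V, {F ∈ Facets | v ∈ F}.card = 3
  edge_facets : ∀ v w : V, G.Adj v w → {F ∈ Facets | v ∈ F ∧ w ∈ F}.card = 2
  nice : ∀ F₁ ∈ Facets, ∀ F₂ ∈ Facets, F₁ ≠ F₂ →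
    (F₁ ∩ F₂).card ≤ 2 ∧ ∀ v ∈ F₁ ∩ F₂, ∀ w ∈ F₁ ∩ F₂, v ≠ w → G.Adj v w
  euler : (Fintype.card V : ℤ) - (G.edgeSet.ncard : ℤ) + (Facets.card : ℤ) = 2

namespace SimpleGraph

variable {V : Type*} {G : SimpleGraph V} {p a b : V}

lemma Walk.exists_adj_reachable_induce_ne : ∀ {v : V}, G.Walk v p → ∀ hv : v ≠ p,
    ∃ x, ∃ hx : G.Adj p x, (G.induce {w | w ≠ p}).Reachable ⟨v, hv⟩ ⟨x, hx.ne'⟩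
  | _, .nil, hv => absurd rfl hv
  | v, .cons (v := m) hvm q, hv => by
    by_cases hm : m = p
    · subst hm
      exact ⟨v, hvm.symm, .refl _⟩
    · obtain ⟨x, hx, hmx⟩ := q.exists_adj_reachable_induce_ne hm
      have hvm' : (G.induce {w | w ≠ p}).Adj ⟨v, hv⟩ ⟨m, hm⟩ := induce_adj.2 hvm
      exact ⟨x, hx, hvm'.reachable.trans hmx⟩

theorem Preconnected.induce_ne (hG : G.Preconnected)
    (h : ∀ x y (hx : G.Adj p x) (hy : G.Adj p y),
      (G.induce {v | v ≠ p}).Reachable ⟨x, hx.ne'⟩ ⟨y, hy.ne'⟩) :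
    (G.induce {v | v ≠ p}).Preconnected := by
  rintro ⟨v, hv⟩ ⟨w, hw⟩
  obtain ⟨x, hx, hvx⟩ := (hG v p).some.exists_adj_reachable_induce_ne hv
  obtain ⟨y, hy, hwy⟩ := (hG w p).some.exists_adj_reachable_induce_ne hw
  exact hvx.trans ((h x y hx hy).trans hwy.symm)

theorem IsCycles.reachable_induce_ne [Finite V] (hG : G.IsCycles) (ha : G.Adj p a)
    (hb : G.Adj p b) (hab : a ≠ b) :
    (G.induce {v | v ≠ p}).Reachable ⟨a, ha.ne'⟩ ⟨b, hb.ne'⟩ := by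
  obtain ⟨q, hq⟩ := (hG.reachable_deleteEdges ha).exists_isPath
  -- A path from `p` to `a` avoiding the edge `pa` leaves `p` along `pb` and never returns.
  cases q with
  | nil => exact absurd rfl ha.ne
  | @cons _ c _ hpc r =>
    obtain ⟨hpc, hca⟩ := (deleteEdges_adj ..).1 hpc
    have hcb : c = b := (hG.existsUnique_ne_adj ha).unique
      ⟨fun h => hca (by rw [h]; rfl), hpc⟩ ⟨hab, hb⟩
    subst hcb
    have hpr : p ∉ r.support := ((Walk.cons_isPath_iff _ _).1 hq).2
    let r' := r.mapLe (G.deleteEdges_le _)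
    have hr' : ∀ x ∈ r'.support, x ∈ {v | v ≠ p} := by
      rw [Walk.support_mapLe_eq_support]
      exact fun x hx hxp => hpr (hxp ▸ hx)
    exact (r'.induce _ hr').reachable.symm

lemma isCycles_spanningCoe_induce {s : Set V}
    (h : ∀ v ∈ s, {w | w ∈ s ∧ G.Adj v w}.ncard = 2) :
    ((⊤ : G.Subgraph).induce s).spanningCoe.IsCycles := by
  rintro v ⟨w, hv, -, -⟩
  rw [← h v hv]
  congr 1
  ext w
  simp [hv]

end SimpleGraph

namespace DiskFaceGraph

open SimpleGraph

variable {V : Type} [Fintype V] [DecidableEq V] (D : DiskFaceGraph V)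

lemma exists_facet_of_adj {p x y : V} (hx : D.G.Adj p x) (hy : D.G.Adj p y) :
    ∃ F ∈ D.Facets, p ∈ F ∧ x ∈ F ∧ y ∈ F := by
  by_contra! h
  have hdisj :
      Disjoint {F ∈ D.Facets | p ∈ F ∧ x ∈ F} {F ∈ D.Facets | p ∈ F ∧ y ∈ F} := by
    simp only [Finset.disjoint_left, Finset.mem_filter]
    rintro F ⟨hF, hpF, hxF⟩ ⟨-, -, hyF⟩
    exact h F hF hpF hxF hyF
  have hsub : {F ∈ D.Facets | p ∈ F ∧ x ∈ F} ∪ {F ∈ D.Facets | p ∈ F ∧ y ∈ F} ⊆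
      {F ∈ D.Facets | p ∈ F} := by
    intro F
    simp only [Finset.mem_union, Finset.mem_filter]
    tauto
  have hcard := Finset.card_le_card hsub
  rw [Finset.card_union_of_disjoint hdisj, D.edge_facets p x hx, D.edge_facets p y hy,
    D.vertex_facets p] at hcard
  omega

lemma reachable_induce_ne_of_adj {p x y : V} (hx : D.G.Adj p x) (hy : D.G.Adj p y) :
    (D.G.induce {v | v ≠ p}).Reachable ⟨x, hx.ne'⟩ ⟨y, hy.ne'⟩ := by
  obtain rfl | hxy := eq_or_ne x y
  · rfl
  obtain ⟨F, hF, hpF, hxF, hyF⟩ := D.exists_facet_of_adj hx hy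
  have hcyc := isCycles_spanningCoe_induce (s := (F : Set V)) (D.facet_two_valent F hF)
  exact (hcyc.reachable_induce_ne ⟨hpF, hxF, hx⟩ ⟨hpF, hyF, hy⟩ hxy).mono
    (comap_monotone _ (Subgraph.spanningCoe_le _))

end DiskFaceGraph

/-- if `Γ` is the (3-regular, planar) one-skeleton of a 3-dimensional
manifold with faces homeomorphic to `D³`, then for every vertex `p` the graph
`Γ \ {p}` obtained by deleting `p` and its incident edges is connected. -/
theorem stmt0 {V : Type} [Fintype V] [DecidableEq V] (D : DiskFaceGraph V) :
    ∀ p : V, (D.G.induce {v : V | v ≠ p}).Connected := by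
  intro p
  obtain ⟨x, hx⟩ : ∃ x, D.G.Adj p x :=
    Set.nonempty_of_ncard_ne_zero (s := {w | D.G.Adj p w}) (by rw [D.regular p]; norm_num)
  exact (SimpleGraph.connected_iff _).2
    ⟨D.connected.preconnected.induce_ne fun _ _ => D.reachable_induce_ne_of_adj,
      ⟨⟨x, hx.ne'⟩⟩⟩
end

section
/- Let Γ be the one-skeleton of a 3-dimensional manifold with faces homeomorphic to D³. If p and q are two vertices of Γ that do not lie on a common facet, then Γ \ {p, q} is connected. -/
/-! A walk in `Γ` between two vertices of `Γ \ {p, q}` can only pass through `p` (or `q`) by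
entering and leaving along two edges at `p`. Since `p` lies on three facets and each edge on two,
these two edges lie on a common facet `F`. As `F` is a cycle, `F \ {p}` is a path joining the two
neighbours of `p`, and it avoids `q` because `q` shares no facet with `p`; so the walk can be
rerouted. The same argument applies at `q` (and `p`, `q` are not adjacent, as every edge lies on a
facet), so connectivity of `Γ` passes to `Γ \ {p, q}`. -/

namespace SimpleGraph

variable {V : Type*} {G : SimpleGraph V}

lemma Connected.induce_compl_singleton_of_isCycles [Finite V] (hconn : G.Connected)
    (hcyc : G.IsCycles) {v : V} (hv : (G.neighborSet v).Nonempty) :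
    (G.induce {v}ᶜ).Connected := by
  classical
  have := Fintype.ofFinite V
  obtain ⟨x, hx : G.Adj v x⟩ := hv
  -- Deleting the edge `vx` keeps the cycle connected and leaves `v` as a leaf.
  have hconn' : (G.deleteEdges {s(v, x)}).Connected :=
    hconn.connected_delete_edge_of_not_isBridge
      fun hbr => isBridge_iff.mp hbr (hcyc.reachable_deleteEdges hx)
  have hdeg : (G.deleteEdges {s(v, x)}).degree v = 1 := by
    rw [degree_eq_one_iff_existsUnique_adj]
    convert hcyc.existsUnique_ne_adj hx using 2 with w
    simp only [deleteEdges_adj, Set.mem_singleton_iff, Sym2.eq_iff]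
    grind [hx.ne]
  exact (hconn'.induce_compl_singleton_of_degree_eq_one hdeg).mono
    (comap_monotone _ (deleteEdges_le _))

lemma Preconnected.induce_of_reachable_neighbors (hG : G.Preconnected) {s : Set V}
    (hnbr : ∀ x ∉ s, G.neighborSet x ⊆ s)
    (hreach : ∀ x ∉ s, ∀ u v : s, G.Adj x u → G.Adj x v → (G.induce s).Reachable u v) :
    (G.induce s).Preconnected := by
  -- `a` follows the walk, lagging one step behind while the walk is outside `s`.
  suffices key : ∀ {x y : V} (w : G.Walk x y) (hy : y ∈ s) (a : s),
      (a : V) = x ∨ (x ∉ s ∧ G.Adj x a) → (G.induce s).Reachable a ⟨y, hy⟩ from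
    fun a b => key (hG a b).some b.2 a (.inl rfl)
  intro x y w
  induction w with
  | nil =>
    rintro hy a (ha | ⟨hx, -⟩)
    · obtain rfl : a = ⟨_, hy⟩ := Subtype.ext ha
      rfl
    · exact absurd hy hx
  | @cons x y _ hxy _ ih =>
    rintro hz a (rfl | ⟨hx, hxa⟩)
    · by_cases hy : y ∈ s
      · exact (Adj.reachable (G := G.induce s) (v := ⟨y, hy⟩) hxy).trans (ih hz _ (.inl rfl))
      · exact ih hz a (.inr ⟨hy, hxy.symm⟩)
    · have hy : y ∈ s := hnbr x hx hxy
      exact (hreach x hx a ⟨y, hy⟩ hxa hxy).trans (ih hz _ (.inl rfl))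

end SimpleGraph

open Finset SimpleGraph

namespace DiskFaceGraph

variable {V : Type} [Fintype V] [DecidableEq V] (D : DiskFaceGraph V)

lemma exists_facet_of_adj_of_adj {p u w : V} (hu : D.G.Adj p u) (hw : D.G.Adj p w) :
    ∃ F ∈ D.Facets, p ∈ F ∧ u ∈ F ∧ w ∈ F := by
  have hcard := card_le_card (s := {F ∈ D.Facets | p ∈ F ∧ u ∈ F} ∪
      {F ∈ D.Facets | p ∈ F ∧ w ∈ F}) (t := {F ∈ D.Facets | p ∈ F})
    fun F => by simp only [mem_union, mem_filter]; tauto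
  rw [D.vertex_facets p] at hcard
  obtain ⟨F, hFu, hFw⟩ := not_disjoint_iff.mp fun hdisj => by
    rw [card_union_of_disjoint hdisj, D.edge_facets p u hu, D.edge_facets p w hw] at hcard
    omega
  rw [mem_filter] at hFu hFw
  exact ⟨F, hFu.1, hFu.2.1, hFu.2.2, hFw.2.2⟩

lemma isCycles_induce_facet {F : Finset V} (hF : F ∈ D.Facets) :
    (D.G.induce (F : Set V)).IsCycles := by
  rintro ⟨v, hv⟩ -
  rw [← D.facet_two_valent F hF v hv, ← Set.ncard_image_of_injective _ Subtype.val_injective]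
  congr 1
  ext w
  simp [and_comm]

lemma induce_facet_compl_connected {F : Finset V} (hF : F ∈ D.Facets) (p : F) :
    ((D.G.induce (F : Set V)).induce {p}ᶜ).Connected := by
  refine (D.facet_conn F hF).induce_compl_singleton_of_isCycles (D.isCycles_induce_facet hF) ?_
  obtain ⟨w, hwF, hpw⟩ := Set.nonempty_of_ncard_ne_zero
    (D.facet_two_valent F hF p p.2 ▸ two_ne_zero)
  exact ⟨⟨w, hwF⟩, hpw⟩

lemma reachable_of_adj_of_adj {s : Set V} {p : V}
    (hs : ∀ F ∈ D.Facets, p ∈ F → (F : Set V) \ {p} ⊆ s) {a d : s}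
    (ha : D.G.Adj p a) (hd : D.G.Adj p d) : (D.G.induce s).Reachable a d := by
  obtain ⟨F, hF, hpF, haF, hdF⟩ := D.exists_facet_of_adj_of_adj ha hd
  have hmaps : Set.MapsTo (Embedding.induce (G := D.G) (F : Set V)) {⟨p, hpF⟩}ᶜ s :=
    fun x hx => hs F hF hpF ⟨x.2, fun hxp => hx (Subtype.ext hxp)⟩
  exact ((D.induce_facet_compl_connected hF ⟨p, hpF⟩).preconnected
    ⟨⟨a, haF⟩, fun h => ha.ne' (congrArg Subtype.val h)⟩
    ⟨⟨d, hdF⟩, fun h => hd.ne' (congrArg Subtype.val h)⟩).map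
    (induceHom (Embedding.induce _).toHom hmaps)

end DiskFaceGraph

theorem stmt1_general {V : Type} [Fintype V] [DecidableEq V] (D : DiskFaceGraph V) (p q : V)
    (h : ∀ F ∈ D.Facets, ¬(p ∈ F ∧ q ∈ F)) :
    (D.G.induce {v : V | v ≠ p ∧ v ≠ q}).Connected := by
  set s := {v : V | v ≠ p ∧ v ≠ q}
  have hpq : ¬D.G.Adj p q := fun hadj => by
    obtain ⟨F, hF, hpF, hqF, -⟩ := D.exists_facet_of_adj_of_adj hadj hadj
    exact h F hF ⟨hpF, hqF⟩
  have hout : ∀ x ∉ s, x = p ∨ x = q := fun x hx => by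
    simpa [s, or_iff_not_imp_left] using hx
  have hnbr : ∀ x ∉ s, D.G.neighborSet x ⊆ s := by
    intro x hx u hu
    rcases hout x hx with rfl | rfl
    · exact ⟨hu.ne', fun huq => hpq (huq ▸ hu)⟩
    · exact ⟨fun hup => hpq (hup ▸ hu).symm, hu.ne'⟩
  have hreach : ∀ x ∉ s, ∀ u v : s, D.G.Adj x u → D.G.Adj x v →
      (D.G.induce s).Reachable u v := by
    refine fun x hx u v hu hv => D.reachable_of_adj_of_adj (fun F hF hxF y hy => ?_) hu hv
    rcases hout x hx with rfl | rfl
    · exact ⟨hy.2, fun hyq => h F hF ⟨hxF, hyq ▸ hy.1⟩⟩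
    · exact ⟨fun hyp => h F hF ⟨hyp ▸ hy.1, hxF⟩, hy.2⟩
  obtain ⟨u, hu⟩ := Set.nonempty_of_ncard_ne_zero (D.regular p ▸ three_ne_zero)
  have : Nonempty s := ⟨⟨u, hnbr p (by simp [s]) hu⟩⟩
  exact ⟨D.connected.preconnected.induce_of_reachable_neighbors hnbr hreach⟩

/-- if `p` and `q` are vertices of the one-skeleton `Γ` of a 3-dimensional
manifold with faces `Q ≅ D³` which do not lie on a common facet, then `Γ \ {p, q}`
is connected. -/
theorem stmt1 {V : Type} [Fintype V] [DecidableEq V] (D : DiskFaceGraph V) (p q : V)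
    (hpq : p ≠ q) (h : ∀ F ∈ D.Facets, ¬(p ∈ F ∧ q ∈ F)) :
    (D.G.induce {v : V | v ≠ p ∧ v ≠ q}).Connected :=
  stmt1_general D p q h
end

section
/- Let Γ be a 3-regular graph embedded in S² arising as the one-skeleton of a 3-dimensional manifold with faces Q ≅ D³, and suppose Γ has exactly 4 vertices. Then Γ is isomorphic either to the complete graph K₄ (the one-skeleton of the 3-simplex) or to the 3-regular graph on 4 vertices with exactly two pairs of parallel edges. -/
/-- Combinatorial data of the one-skeleton `Γ` of a 3-dimensional manifold with faces
`Q ≅ D³`, allowing multiple edges: a 3-regular loopless multigraph embedded in the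
boundary sphere `∂Q = S²` (planarity being recorded by Euler's formula for the
embedding), together with the facets of `Q`, each facet being a closed cycle recorded by
its set of edges; every edge lies on exactly 2 facets and every vertex on exactly 3. -/
structure DiskFaceMultigraph (V E : Type) [Fintype V] [Fintype E]
    [DecidableEq V] [DecidableEq E] where
  ends : E → Sym2 V
  no_loops : ∀ e, ¬ (ends e).IsDiag
  regular : ∀ v : V, {e : E | v ∈ ends e}.ncard = 3
  connected : ∀ v w : V, Relation.ReflTransGen (fun a b => ∃ e, ends e = s(a, b)) v w
  Facets : Finset (Finset E)
  facet_nonempty : ∀ F ∈ Facets, F.Nonempty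
  facet_cycle : ∀ F ∈ Facets, ∀ v : V,
    (∃ e ∈ F, v ∈ ends e) → {e : E | e ∈ F ∧ v ∈ ends e}.ncard = 2
  facet_conn : ∀ F ∈ Facets, ∀ e ∈ F, ∀ f ∈ F,
    Relation.ReflTransGen (fun a b => a ∈ F ∧ b ∈ F ∧ ∃ v, v ∈ ends a ∧ v ∈ ends b) e f
  vertex_facets : ∀ v : V, {F ∈ Facets | ∃ e ∈ F, v ∈ ends e}.card = 3
  edge_facets : ∀ e : E, {F ∈ Facets | e ∈ F}.card = 2
  euler : (Fintype.card V : ℤ) - (Fintype.card E : ℤ) + (Facets.card : ℤ) = 2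

/-- a 3-regular multigraph on exactly 4 vertices arising as the
one-skeleton of a 3-dimensional manifold with faces `Q ≅ D³` is either the complete
graph `K₄` (the one-skeleton of the 3-simplex) or the 3-regular graph on 4 vertices with
exactly two pairs of parallel edges (the one-skeleton of `D² × I`): vertices `p₁, p₂`
joined by an edge, `q₁, q₂` joined by an edge, and double edges `p₁q₁` and `p₂q₂`. -/
theorem stmt12 {V E : Type} [Fintype V] [Fintype E] [DecidableEq V] [DecidableEq E]
    (D : DiskFaceMultigraph V E) (hV : Fintype.card V = 4) :
    ((∀ e f : E, D.ends e = D.ends f → e = f) ∧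
      ∀ v w : V, v ≠ w → ∃ e : E, D.ends e = s(v, w)) ∨
    (∃ p₁ p₂ q₁ q₂ : V, p₁ ≠ p₂ ∧ p₁ ≠ q₁ ∧ p₁ ≠ q₂ ∧ p₂ ≠ q₁ ∧ p₂ ≠ q₂ ∧ q₁ ≠ q₂ ∧
      (Finset.univ.val.map D.ends) =
        ({s(p₁, p₂), s(q₁, q₂), s(p₁, q₁), s(p₁, q₁), s(p₂, q₂), s(p₂, q₂)} :
          Multiset (Sym2 V))) := by
  classical
  -- `S v` is the finset of edges at `v`
  set S : V → Finset E := fun v => Finset.univ.filter (fun e => v ∈ D.ends e) with hSdef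
  have mem_S : ∀ (v : V) (m : E), m ∈ S v ↔ v ∈ D.ends m := by
    intro v m; simp [hSdef]
  have hSc : ∀ v, (S v).card = 3 := by
    intro v
    have h := D.regular v
    have ht : {e : E | v ∈ D.ends e}.toFinset = S v := by
      ext m; simp [hSdef]
    rwa [Set.ncard_eq_toFinset_card', ht] at h
  -- each edge has exactly 2 endpoints
  have hends : ∀ e : E, ∃ a b : V, a ≠ b ∧ D.ends e = s(a, b) := by
    intro e
    have key : ∀ z : Sym2 V, ¬ z.IsDiag → ∃ a b : V, a ≠ b ∧ z = s(a, b) := by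
      intro z
      induction z using Sym2.ind with
      | _ x y =>
        intro hz
        exact ⟨x, y, fun h => hz (Sym2.mk_isDiag_iff.mpr h), rfl⟩
    exact key _ (D.no_loops e)
  have hmem2 : ∀ e : E, (Finset.univ.filter (fun v => v ∈ D.ends e)).card = 2 := by
    intro e
    obtain ⟨a, b, hab, he⟩ := hends e
    have : Finset.univ.filter (fun v => v ∈ D.ends e) = {a, b} := by
      ext v; simp [he, Sym2.mem_iff]
    rw [this, Finset.card_insert_of_notMem (by simp [hab]), Finset.card_singleton]
  -- handshake: |E| = 6
  have hE : Fintype.card E = 6 := by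
    have h12 : ∑ v : V, (S v).card = 12 := by
      rw [Finset.sum_congr rfl (fun v _ => hSc v), Finset.sum_const, Finset.card_univ, hV]
      norm_num
    have hswap : ∑ v : V, (S v).card
        = ∑ e : E, (Finset.univ.filter (fun v => v ∈ D.ends e)).card := by
      simp only [hSdef, Finset.card_filter]
      exact Finset.sum_comm
    rw [hswap, Finset.sum_congr rfl (fun e _ => hmem2 e), Finset.sum_const,
      Finset.card_univ, smul_eq_mul] at h12
    omega
  by_cases hinj : Function.Injective D.ends
  · -- K₄ case
    left
    refine ⟨fun e f h => hinj h, ?_⟩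
    have hcard : Fintype.card {z : Sym2 V // ¬ z.IsDiag} = 6 := by
      rw [Sym2.card_subtype_not_diag, hV]
      decide
    have hbij : Function.Bijective
        (fun e : E => (⟨D.ends e, D.no_loops e⟩ : {z : Sym2 V // ¬ z.IsDiag})) := by
      rw [Fintype.bijective_iff_injective_and_card]
      refine ⟨fun e f h => hinj ?_, by rw [hE, hcard]⟩
      simpa using congrArg Subtype.val h
    intro v w hvw
    obtain ⟨e, he⟩ := hbij.2 ⟨s(v, w), by rw [Sym2.mk_isDiag_iff]; exact hvw⟩
    exact ⟨e, by simpa using congrArg Subtype.val he⟩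
  · -- doubled edges case
    right
    obtain ⟨e, f, hef, hef_ne⟩ := Function.not_injective_iff.mp hinj
    obtain ⟨a, b, hab_ne, hab⟩ := hends e
    have hfab : D.ends f = s(a, b) := hef.symm.trans hab
    -- there is no third parallel edge between a and b
    have hno3 : ∀ m, D.ends m = s(a, b) → m = e ∨ m = f := by
      by_contra hcon
      push_neg at hcon
      obtain ⟨g, hg, hge, hgf⟩ := hcon
      have hcard3 : ({e, f, g} : Finset E).card = 3 := by
        rw [Finset.card_insert_of_notMem (by simp [hef_ne, Ne.symm hge]),
          Finset.card_insert_of_notMem (by simp [Ne.symm hgf]), Finset.card_singleton]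
      have hsub : ∀ v : V, v ∈ s(a, b) → S v = {e, f, g} := by
        intro v hv
        refine (Finset.eq_of_subset_of_card_le ?_ (by rw [hSc, hcard3])).symm
        intro m hm
        simp only [Finset.mem_insert, Finset.mem_singleton] at hm
        rw [mem_S]
        rcases hm with rfl | rfl | rfl
        · rwa [hab]
        · rwa [hfab]
        · rwa [hg]
      have hSa := hsub a (Sym2.mem_mk_left a b)
      have key : ∀ w, Relation.ReflTransGen
          (fun x y => ∃ m, D.ends m = s(x, y)) a w → w = a ∨ w = b := by
        intro w hw
        induction hw with
        | refl => exact Or.inl rfl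
        | @tail z w' _ h2 ih =>
          obtain ⟨m, hm⟩ := h2
          have hzab : z ∈ s(a, b) := by
            rcases ih with rfl | rfl
            · exact Sym2.mem_mk_left _ _
            · exact Sym2.mem_mk_right _ _
          have hmS : m ∈ S z := by rw [mem_S, hm]; exact Sym2.mem_mk_left _ _
          rw [hsub z hzab] at hmS
          simp only [Finset.mem_insert, Finset.mem_singleton] at hmS
          have hmab : D.ends m = s(a, b) := by
            rcases hmS with rfl | rfl | rfl
            · exact hab
            · exact hfab
            · exact hg
          have : w' ∈ s(a, b) := by
            rw [← hmab, hm]; exact Sym2.mem_mk_right _ _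
          rw [Sym2.mem_iff] at this
          exact this
      -- but there is a vertex outside {a, b}
      have hpos : 0 < (Finset.univ \ ({a, b} : Finset V)).card := by
        rw [Finset.card_sdiff_of_subset (Finset.subset_univ _), Finset.card_univ, hV]
        have : ({a, b} : Finset V).card ≤ 2 := Finset.card_insert_le a {b}
        omega
      obtain ⟨c, hc⟩ := Finset.card_pos.mp hpos
      rw [Finset.mem_sdiff] at hc
      have hc2 := hc.2
      simp only [Finset.mem_insert, Finset.mem_singleton, not_or] at hc2
      rcases key c (D.connected a c) with rfl | rfl
      · exact hc2.1 rfl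
      · exact hc2.2 rfl
    -- the third edge `g` at `a`
    have hefSa : ({e, f} : Finset E) ⊆ S a := by
      intro m hm
      simp only [Finset.mem_insert, Finset.mem_singleton] at hm
      rw [mem_S]
      rcases hm with rfl | rfl
      · rw [hab]; exact Sym2.mem_mk_left _ _
      · rw [hfab]; exact Sym2.mem_mk_left _ _
    have hsdA : (S a \ {e, f}).card = 1 := by
      rw [Finset.card_sdiff_of_subset hefSa, hSc,
        Finset.card_insert_of_notMem (by simp [hef_ne]), Finset.card_singleton]
    obtain ⟨g, hg⟩ := Finset.card_eq_one.mp hsdA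
    have hgmem : g ∈ S a \ ({e, f} : Finset E) := hg ▸ Finset.mem_singleton_self g
    rw [Finset.mem_sdiff] at hgmem
    have hgef : g ≠ e ∧ g ≠ f := by
      have := hgmem.2; simp only [Finset.mem_insert, Finset.mem_singleton, not_or] at this
      exact this
    have hSa_eq : S a = {e, f, g} := by
      rw [← Finset.union_sdiff_of_subset hefSa, hg]
      ext m; simp only [Finset.mem_union, Finset.mem_insert, Finset.mem_singleton]; tauto
    -- ends g = s(a, c) with c ∉ {a, b}
    have hag : a ∈ D.ends g := (mem_S a g).mp hgmem.1
    obtain ⟨c, hgc⟩ := Sym2.mem_iff_exists.mp hag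
    have hca : c ≠ a := by
      intro h; exact D.no_loops g (by rw [hgc, h, Sym2.mk_isDiag_iff])
    have hcb : c ≠ b := by
      intro h
      rcases hno3 g (by rw [hgc, h]) with rfl | rfl
      · exact hgef.1 rfl
      · exact hgef.2 rfl
    -- the third edge `h` at `b`
    have hefSb : ({e, f} : Finset E) ⊆ S b := by
      intro m hm
      simp only [Finset.mem_insert, Finset.mem_singleton] at hm
      rw [mem_S]
      rcases hm with rfl | rfl
      · rw [hab]; exact Sym2.mem_mk_right _ _
      · rw [hfab]; exact Sym2.mem_mk_right _ _
    have hsdB : (S b \ {e, f}).card = 1 := by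
      rw [Finset.card_sdiff_of_subset hefSb, hSc,
        Finset.card_insert_of_notMem (by simp [hef_ne]), Finset.card_singleton]
    obtain ⟨h, hh⟩ := Finset.card_eq_one.mp hsdB
    have hhmem : h ∈ S b \ ({e, f} : Finset E) := hh ▸ Finset.mem_singleton_self h
    rw [Finset.mem_sdiff] at hhmem
    have hhef : h ≠ e ∧ h ≠ f := by
      have := hhmem.2; simp only [Finset.mem_insert, Finset.mem_singleton, not_or] at this
      exact this
    have hSb_eq : S b = {e, f, h} := by
      rw [← Finset.union_sdiff_of_subset hefSb, hh]
      ext m; simp only [Finset.mem_union, Finset.mem_insert, Finset.mem_singleton]; tauto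
    have hbh : b ∈ D.ends h := (mem_S b h).mp hhmem.1
    obtain ⟨y, hhy⟩ := Sym2.mem_iff_exists.mp hbh
    have hyb : y ≠ b := by
      intro hyy; exact D.no_loops h (by rw [hhy, hyy, Sym2.mk_isDiag_iff])
    have hya : y ≠ a := by
      intro hyy
      rcases hno3 h (by rw [hhy, hyy]; exact Sym2.eq_swap) with rfl | rfl
      · exact hhef.1 rfl
      · exact hhef.2 rfl
    have hgh : g ≠ h := by
      intro hgh
      have : b ∈ D.ends g := hgh ▸ hbh
      rw [hgc, Sym2.mem_iff] at this
      rcases this with h1 | h1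
      · exact hab_ne h1.symm
      · exact hcb h1.symm
    -- the fourth vertex d
    have habc : ({a, b, c} : Finset V).card = 3 := by
      rw [Finset.card_insert_of_notMem (by simp [hab_ne, Ne.symm hca]),
        Finset.card_insert_of_notMem (by simp [Ne.symm hcb]), Finset.card_singleton]
    have hd1 : (Finset.univ \ ({a, b, c} : Finset V)).card = 1 := by
      rw [Finset.card_sdiff_of_subset (Finset.subset_univ _), Finset.card_univ, hV, habc]
    obtain ⟨d, hd⟩ := Finset.card_eq_one.mp hd1
    have hdmem : d ∈ Finset.univ \ ({a, b, c} : Finset V) := hd ▸ Finset.mem_singleton_self d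
    rw [Finset.mem_sdiff] at hdmem
    have hdabc : d ≠ a ∧ d ≠ b ∧ d ≠ c := by
      have := hdmem.2; simp only [Finset.mem_insert, Finset.mem_singleton, not_or] at this
      exact this
    have hothers : ∀ v : V, v ≠ a → v ≠ b → v ≠ c → v = d := by
      intro v h1 h2 h3
      have : v ∈ Finset.univ \ ({a, b, c} : Finset V) := by
        rw [Finset.mem_sdiff]; simp [h1, h2, h3]
      rw [hd] at this; simpa using this
    -- the two remaining edges k, l, both with ends s(c, d)
    have hefgh : ({e, f, g, h} : Finset E).card = 4 := by
      rw [Finset.card_insert_of_notMem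
          (by simp [hef_ne, Ne.symm hgef.1, Ne.symm hhef.1]),
        Finset.card_insert_of_notMem (by simp [Ne.symm hgef.2, Ne.symm hhef.2]),
        Finset.card_insert_of_notMem (by simp [hgh]), Finset.card_singleton]
    have hT : (Finset.univ \ ({e, f, g, h} : Finset E)).card = 2 := by
      rw [Finset.card_sdiff_of_subset (Finset.subset_univ _), Finset.card_univ, hE, hefgh]
    obtain ⟨k, l, hkl, hT_eq⟩ := Finset.card_eq_two.mp hT
    have hkmem : k ∉ ({e, f, g, h} : Finset E) := by
      have : k ∈ Finset.univ \ ({e, f, g, h} : Finset E) := by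
        rw [hT_eq]; exact Finset.mem_insert_self k {l}
      exact (Finset.mem_sdiff.mp this).2
    have hlmem : l ∉ ({e, f, g, h} : Finset E) := by
      have : l ∈ Finset.univ \ ({e, f, g, h} : Finset E) := by
        rw [hT_eq]; simp
      exact (Finset.mem_sdiff.mp this).2
    simp only [Finset.mem_insert, Finset.mem_singleton, not_or] at hkmem hlmem
    -- any edge outside {e, f, g, h} has ends s(c, d)
    have hout : ∀ m : E, m ≠ e → m ≠ f → m ≠ g → m ≠ h → D.ends m = s(c, d) := by
      intro m h1 h2 h3 h4
      have hma : a ∉ D.ends m := by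
        intro hma
        have : m ∈ S a := (mem_S a m).mpr hma
        rw [hSa_eq] at this
        simp only [Finset.mem_insert, Finset.mem_singleton] at this
        tauto
      have hmb : b ∉ D.ends m := by
        intro hmb
        have : m ∈ S b := (mem_S b m).mpr hmb
        rw [hSb_eq] at this
        simp only [Finset.mem_insert, Finset.mem_singleton] at this
        tauto
      obtain ⟨u, w, huw, hm⟩ := hends m
      have hu : u ∈ D.ends m := hm ▸ Sym2.mem_mk_left u w
      have hw : w ∈ D.ends m := hm ▸ Sym2.mem_mk_right u w
      have hucd : u = c ∨ u = d := by
        by_cases hc' : u = c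
        · exact Or.inl hc'
        · exact Or.inr (hothers u (fun h' => hma (h' ▸ hu)) (fun h' => hmb (h' ▸ hu)) hc')
      have hwcd : w = c ∨ w = d := by
        by_cases hc' : w = c
        · exact Or.inl hc'
        · exact Or.inr (hothers w (fun h' => hma (h' ▸ hw)) (fun h' => hmb (h' ▸ hw)) hc')
      rcases hucd with rfl | rfl <;> rcases hwcd with rfl | rfl
      · exact absurd rfl huw
      · exact hm
      · rw [hm]; exact Sym2.eq_swap
      · exact absurd rfl huw
    have hk : D.ends k = s(c, d) := hout k hkmem.1 hkmem.2.1 hkmem.2.2.1 hkmem.2.2.2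
    have hl : D.ends l = s(c, d) := hout l hlmem.1 hlmem.2.1 hlmem.2.2.1 hlmem.2.2.2
    -- y = d (otherwise c would have degree 4)
    have hSc_eq : S c = {g, k, l} := by
      have hcard3 : ({g, k, l} : Finset E).card = 3 := by
        rw [Finset.card_insert_of_notMem
            (by simp [Ne.symm hkmem.2.2.1, Ne.symm hlmem.2.2.1]),
          Finset.card_insert_of_notMem (by simp [hkl]), Finset.card_singleton]
      refine (Finset.eq_of_subset_of_card_le ?_ (by rw [hSc, hcard3])).symm
      intro m hm
      simp only [Finset.mem_insert, Finset.mem_singleton] at hm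
      rw [mem_S]
      rcases hm with rfl | rfl | rfl
      · rw [hgc]; exact Sym2.mem_mk_right _ _
      · rw [hk]; exact Sym2.mem_mk_left _ _
      · rw [hl]; exact Sym2.mem_mk_left _ _
    have hyc : y ≠ c := by
      intro hyy
      have : h ∈ S c := by
        rw [mem_S, hhy, hyy]; exact Sym2.mem_mk_right _ _
      rw [hSc_eq] at this
      simp only [Finset.mem_insert, Finset.mem_singleton] at this
      rcases this with rfl | rfl | rfl
      · exact hgh rfl
      · exact hkmem.2.2.2 rfl
      · exact hlmem.2.2.2 rfl
    have hyd : y = d := hothers y hya hyb hyc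
    have hhd : D.ends h = s(b, d) := by rw [hhy, hyd]
    -- the universe of edges
    have hnodup : (g ::ₘ h ::ₘ e ::ₘ f ::ₘ k ::ₘ l ::ₘ 0 : Multiset E).Nodup := by
      simp only [Multiset.nodup_cons, Multiset.mem_cons, Multiset.notMem_zero,
        Multiset.mem_singleton, Multiset.nodup_zero, and_true, not_or, or_false]
      refine ⟨⟨hgh, hgef.1, hgef.2, Ne.symm hkmem.2.2.1, Ne.symm hlmem.2.2.1⟩,
        ⟨hhef.1, hhef.2, Ne.symm hkmem.2.2.2, Ne.symm hlmem.2.2.2⟩,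
        ⟨hef_ne, Ne.symm hkmem.1, Ne.symm hlmem.1⟩,
        ⟨Ne.symm hkmem.2.1, Ne.symm hlmem.2.1⟩, hkl, ?_⟩
      simp
    have huniv : (Finset.univ.val : Multiset E) = g ::ₘ h ::ₘ e ::ₘ f ::ₘ k ::ₘ l ::ₘ 0 := by
      symm
      apply Multiset.eq_of_le_of_card_le
      · rw [Multiset.le_iff_subset hnodup]
        intro x _
        simp [Finset.mem_val]
      · have : Multiset.card (Finset.univ.val : Multiset E) = 6 := by
          rw [← Finset.card_def, Finset.card_univ, hE]
        simp [this]
    refine ⟨a, c, b, d, Ne.symm hca, hab_ne, Ne.symm hdabc.1, hcb, Ne.symm hdabc.2.2,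
      Ne.symm hdabc.2.1, ?_⟩
    rw [huniv]
    simp only [Multiset.map_cons, Multiset.map_zero, hgc, hhd, hab, hfab, hk, hl]
    rfl
end

section
/- In a torus graph (Γ, A) of valence n, if two distinct vertices p and q are joined by k parallel edges e₁, …, e_k with k ≥ 2, then for each i, A(eᵢ) and A(ēᵢ) agree up to sign, and the congruence conditions of the connection force: for every edge e ∈ E_p(Γ), A(∇_{e₁}(e)) − A(e) is an integer multiple of A(e₁). In the case n = 3 and k = 3, the graph Γ has exactly the two vertices p and q. -/
/-- An abstract `n`-valent torus graph `(Γ, 𝒜)` with a connection `∇`, following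
Maeda–Masuda–Panov.  `E` is the set of oriented edges, `src` the initial vertex,
`rev` orientation reversal, `A` the axial function and `conn e` the bijection
`∇_e : E_p(Γ) → E_q(Γ)` for an edge `e = pq`. -/
structure TorusGraph (n : ℕ) where
  V : Type
  E : Type
  src : E → V
  rev : E → E
  rev_rev : ∀ e, rev (rev e) = e
  no_loop : ∀ e, src (rev e) ≠ src e
  valence : ∀ v : V, Nat.card {e : E // src e = v} = n
  connected : ∀ v w : V,
    Relation.ReflTransGen (fun a b => ∃ e, src e = a ∧ src (rev e) = b) v w
  A : E → Fin n → ℤ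
  A_rev : ∀ e, A (rev e) = A e ∨ A (rev e) = - A e
  A_span : ∀ v : V,
    Submodule.span ℤ {x | ∃ e, src e = v ∧ A e = x} = (⊤ : Submodule ℤ (Fin n → ℤ))
  conn : E → E → E
  conn_src : ∀ e e', src e' = src e → src (conn e e') = src (rev e)
  conn_self : ∀ e, conn e e = rev e
  conn_rev : ∀ e e', src e' = src e → conn (rev e) (conn e e') = e'
  conn_cong : ∀ e e', src e' = src e → ∃ c : ℤ, A (conn e e') - A e' = c • A e

/-- if two distinct vertices `p, q` of an `n`-valent torus graph are joined
by `k ≥ 2` parallel edges `e₁, …, e_k`, then each `𝒜(eᵢ)` agrees with `𝒜(ēᵢ)` up to sign,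
the connection along `e₁` forces `𝒜(∇_{e₁}(e)) ≡ 𝒜(e) mod 𝒜(e₁)` for every `e ∈ E_p(Γ)`,
and in the case `n = 3`, `k = 3` the graph has exactly the two vertices `p` and `q`. -/
theorem stmt13 (n k : ℕ) (hk : 2 ≤ k) (T : TorusGraph n) (p q : T.V) (hpq : p ≠ q)
    (es : Fin k → T.E) (hinj : Function.Injective es)
    (hsrc : ∀ i, T.src (es i) = p) (hdst : ∀ i, T.src (T.rev (es i)) = q) :
    (∀ i, T.A (es i) = T.A (T.rev (es i)) ∨ T.A (es i) = - T.A (T.rev (es i))) ∧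
    (∀ e : T.E, T.src e = p → ∀ i,
      ∃ c : ℤ, T.A (T.conn (es i) e) - T.A e = c • T.A (es i)) ∧
    (n = 3 → k = 3 → ∀ v : T.V, v = p ∨ v = q) := by
  refine ⟨fun i => ?_, fun e he i => T.conn_cong (es i) e (by rw [he, hsrc i]), ?_⟩
  · rcases T.A_rev (es i) with h | h
    · exact Or.inl h.symm
    · right; rw [h, neg_neg]
  · intro hn hk3
    -- every edge at p is one of the es i
    have hsurjp : ∀ e : T.E, T.src e = p → ∃ i, es i = e := by
      have hbij : Function.Bijective (fun i : Fin k => (⟨es i, hsrc i⟩ : {e : T.E // T.src e = p})) := by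
        haveI : Finite {e : T.E // T.src e = p} :=
          Nat.finite_of_card_ne_zero (by rw [T.valence p, hn]; norm_num)
        rw [Nat.bijective_iff_injective_and_card]
        constructor
        · intro a b hab
          exact hinj (congrArg Subtype.val hab)
        · rw [T.valence p, Nat.card_eq_fintype_card, Fintype.card_fin, hn, hk3]
      intro e he
      obtain ⟨i, hi⟩ := hbij.2 ⟨e, he⟩
      exact ⟨i, congrArg Subtype.val hi⟩
    have hsurjq : ∀ e : T.E, T.src e = q → ∃ i, T.rev (es i) = e := by
      have hbij : Function.Bijective (fun i : Fin k => (⟨T.rev (es i), hdst i⟩ : {e : T.E // T.src e = q})) := by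
        haveI : Finite {e : T.E // T.src e = q} :=
          Nat.finite_of_card_ne_zero (by rw [T.valence q, hn]; norm_num)
        rw [Nat.bijective_iff_injective_and_card]
        constructor
        · intro a b hab
          have := congrArg T.rev (congrArg Subtype.val hab)
          rw [T.rev_rev, T.rev_rev] at this
          exact hinj this
        · rw [T.valence q, Nat.card_eq_fintype_card, Fintype.card_fin, hn, hk3]
      intro e he
      obtain ⟨i, hi⟩ := hbij.2 ⟨e, he⟩
      exact ⟨i, congrArg Subtype.val hi⟩
    intro v
    have h := T.connected p v
    induction h with
    | refl => exact Or.inl rfl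
    | tail _ step ih =>
      rename_i b c _
      obtain ⟨e, he1, he2⟩ := step
      rcases ih with hb | hb
      · obtain ⟨i, hi⟩ := hsurjp e (by rw [he1, hb])
        right; rw [← he2, ← hi, hdst i]
      · obtain ⟨i, hi⟩ := hsurjq e (by rw [he1, hb])
        left; rw [← he2, ← hi, T.rev_rev, hsrc i]
end

section
/- Let p ∈ V(Γ₁), q ∈ V(Γ₂) be vertices of two oriented torus graphs (Γ₁, A₁, σ₁), (Γ₂, A₂, σ₂) of the same valence n with {A₁(e) : e ∈ E_p(Γ₁)} = {A₂(e) : e ∈ E_q(Γ₂)} as subsets of Z^n and σ₁(p) ≠ σ₂(q). Then the connected sum graph Γ = Γ₁ #_{(p,q)} Γ₂, obtained by deleting p and q and joining each pᵢ to the qᵢ with matching axial value, carries a well-defined orientation σ: V(Γ) → {±1} restricting to σ₁ and σ₂, i.e., σ(π_V(e))A(e) = −σ(π_V(ē))A(ē) holds for all new edges pᵢqᵢ. -/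
/-- given oriented torus graphs `(Γ₁, 𝒜₁, σ₁)`, `(Γ₂, 𝒜₂, σ₂)` of the same
valence `n`, vertices `p`, `q` with the same sets of axial values on outgoing edges and
`σ₁(p) ≠ σ₂(q)`, the connected sum `Γ₁ #_{(p,q)} Γ₂` carries a well-defined orientation:
for every new edge `pᵢqᵢ` (obtained by joining an edge `e ∈ E_p(Γ₁)` to the edge
`f ∈ E_q(Γ₂)` with `𝒜₁(e) = 𝒜₂(f)`, with `𝒜(pᵢqᵢ) = 𝒜₁(pᵢp)` and `𝒜(qᵢpᵢ) = 𝒜₂(qᵢq)`)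
the orientation identity `σ(π_V(e))𝒜(e) = -σ(π_V(ē))𝒜(ē)` holds. -/
theorem stmt15 (n : ℕ) (T₁ T₂ : TorusGraph n)
    (σ₁ : T₁.V → ℤ) (σ₂ : T₂.V → ℤ)
    (hσ₁ : ∀ v, σ₁ v = 1 ∨ σ₁ v = -1) (hσ₂ : ∀ v, σ₂ v = 1 ∨ σ₂ v = -1)
    (hor₁ : ∀ e, σ₁ (T₁.src e) • T₁.A e = - (σ₁ (T₁.src (T₁.rev e)) • T₁.A (T₁.rev e)))
    (hor₂ : ∀ f, σ₂ (T₂.src f) • T₂.A f = - (σ₂ (T₂.src (T₂.rev f)) • T₂.A (T₂.rev f)))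
    (p : T₁.V) (q : T₂.V)
    (hmatch : {x | ∃ e, T₁.src e = p ∧ T₁.A e = x} = {x | ∃ f, T₂.src f = q ∧ T₂.A f = x})
    (hsign : σ₁ p ≠ σ₂ q) :
    ∀ (e : T₁.E) (f : T₂.E), T₁.src e = p → T₂.src f = q → T₁.A e = T₂.A f →
      σ₁ (T₁.src (T₁.rev e)) • T₁.A (T₁.rev e) =
        - (σ₂ (T₂.src (T₂.rev f)) • T₂.A (T₂.rev f)) := by
  intro e f he hf hA
  have h1 := hor₁ e
  have h2 := hor₂ f
  rw [he] at h1
  rw [hf] at h2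
  have hs : σ₁ p = - σ₂ q := by
    rcases hσ₁ p with h | h <;> rcases hσ₂ q with h' | h' <;>
      simp [h, h'] at hsign ⊢
  have l1 : σ₁ (T₁.src (T₁.rev e)) • T₁.A (T₁.rev e) = - (σ₁ p • T₁.A e) := by
    rw [h1, neg_neg]
  have l2 : σ₂ (T₂.src (T₂.rev f)) • T₂.A (T₂.rev f) = - (σ₂ q • T₂.A f) := by
    rw [h2, neg_neg]
  rw [l1, l2, neg_neg, hs, hA, neg_smul, neg_neg]
end
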